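/- Let M be a finite matroid with rank function r, and let X and Y be cyclic flats of M with X ⊊ Y. Then 0 < r(Y) − r(X) < |Y \ X|. -/

import Mathlib

namespace Matroid

variable {α β : Type*}

/-- A circuit of a matroid: a minimal dependent set. -/
def IsCircuit' (M : Matroid α) (C : Set α) : Prop :=
  M.Dep C ∧ ∀ D, D ⊂ C → M.Indep D

/-- A cyclic flat: a flat that is a (possibly empty) union of circuits. -/
def CyclicFlat (M : Matroid α) (X : Set α) : Prop :=
  M.IsFlat X ∧ ∀ e ∈ X, ∃ C, M.IsCircuit' C ∧ C ⊆ X ∧ e ∈ C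

/-- The rank of a set: the maximum size of an independent subset. -/
noncomputable def rk (M : Matroid α) (X : Set α) : ℕ :=
  sSup {n | ∃ I, M.Indep I ∧ I ⊆ X ∧ I.ncard = n}

/-- Deletion of a set from a matroid. -/
def del (M : Matroid α) (D : Set α) : Matroid α := M ↾ (M.E \ D)

/-- Contraction of a set in a matroid. -/
def con (M : Matroid α) (C : Set α) : Matroid α := (M✶ ↾ (M.E \ C))✶

/-- `N` is a minor of `M` if it is obtained from `M` by a contraction and a deletion. -/
def IsMinorOf (N M : Matroid α) : Prop := ∃ C D, N = (M.con C).del D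

/-- Matroid isomorphism: a bijection of ground sets preserving independence. -/
def IsIsoTo (M : Matroid α) (N : Matroid β) : Prop :=
  ∃ e : M.E ≃ N.E, ∀ I : Set M.E,
    M.Indep (Subtype.val '' I) ↔ N.Indep (Subtype.val '' (e '' I))

end Matroid

/-!
We work with Mathlib's `ℕ∞`-valued rank `eRk`, which agrees with `rk` when the rank is finite.
For the lower bound, any `e ∈ Y \ X` lies outside the closure of the flat `X`, so
`r X + 1 = r (X ∪ {e}) ≤ r Y`. For the upper bound, `e` lies on a circuit inside `Y`, hence
`r Y = r (Y - e) ≤ r X + |(Y \ X) - e| = r X + |Y \ X| - 1`.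
-/

open Set

namespace Matroid

variable {α : Type*} {M : Matroid α} {C X Y : Set α} {e : α}

lemma isCircuit'_iff : M.IsCircuit' C ↔ M.IsCircuit C := by
  rw [isCircuit_iff_forall_ssubset]
  rfl

lemma rk_eq_eRk [M.RankFinite] (X : Set α) : (M.rk X : ℕ∞) = M.eRk X := by
  obtain ⟨I, hI⟩ := M.exists_isBasis' X
  have hIfin : I.Finite := hI.indep.finite
  have hmax : IsGreatest {n | ∃ J, M.Indep J ∧ J ⊆ X ∧ J.ncard = n} I.ncard := by
    refine ⟨⟨I, hI.indep, hI.subset, rfl⟩, ?_⟩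
    rintro _ ⟨J, hJ, hJX, rfl⟩
    have hle := hJ.encard_le_eRk_of_subset hJX
    rw [← hI.encard_eq_eRk, ← hIfin.cast_ncard_eq, ← hJ.finite.cast_ncard_eq] at hle
    exact_mod_cast hle
  rw [rk, hmax.csSup_eq, hIfin.cast_ncard_eq, hI.encard_eq_eRk]

lemma IsFlat.eRk_add_one_le_eRk_of_ssubset (hX : M.IsFlat X) (hXY : X ⊂ Y) (hY : Y ⊆ M.E) :
    M.eRk X + 1 ≤ M.eRk Y := by
  obtain ⟨e, heY, heX⟩ := exists_of_ssubset hXY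
  rw [← eRk_insert_eq_add_one ⟨hY heY, by rwa [hX.closure]⟩]
  exact M.eRk_mono (insert_subset heY hXY.subset)

lemma CyclicFlat.eRk_sdiff_singleton (hY : M.CyclicFlat Y) (he : e ∈ Y) :
    M.eRk (Y \ {e}) = M.eRk Y := by
  obtain ⟨C, hC, hCY, heC⟩ := hY.2 e he
  have he_cl : e ∈ M.closure (Y \ {e}) :=
    M.closure_subset_closure (sdiff_subset_sdiff_left hCY)
      ((isCircuit'_iff.1 hC).mem_closure_sdiff_singleton_of_mem heC)
  rw [← eRk_closure_eq, closure_sdiff_singleton_eq_closure he_cl, eRk_closure_eq]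

lemma CyclicFlat.eRk_add_one_le_eRk_add_encard_sdiff (hY : M.CyclicFlat Y) (hXY : X ⊂ Y) :
    M.eRk Y + 1 ≤ M.eRk X + (Y \ X).encard := by
  obtain ⟨e, heY, heX⟩ := exists_of_ssubset hXY
  have hcover : Y \ {e} ⊆ X ∪ (Y \ X) \ {e} := by
    intro f ⟨hfY, hfe⟩
    by_cases hfX : f ∈ X
    · exact Or.inl hfX
    · exact Or.inr ⟨⟨hfY, hfX⟩, hfe⟩
  calc M.eRk Y + 1 = M.eRk (Y \ {e}) + 1 := by rw [hY.eRk_sdiff_singleton heY]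
    _ ≤ M.eRk X + ((Y \ X) \ {e}).encard + 1 := by
      gcongr
      exact (M.eRk_mono hcover).trans (M.eRk_union_le_eRk_add_encard _ _)
    _ = M.eRk X + (Y \ X).encard := by
      rw [add_assoc, encard_sdiff_singleton_add_one (show e ∈ Y \ X from ⟨heY, heX⟩)]

end Matroid

/-- For cyclic flats `X ⊊ Y` of a finite matroid `M`, `0 < r Y - r X < |Y \ X|`. -/
theorem cyclicFlat_rank_strict {α : Type*} (M : Matroid α) [M.Finite]
    (X Y : Set α) (hX : M.CyclicFlat X) (hY : M.CyclicFlat Y) (hXY : X ⊂ Y) :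
    0 < (M.rk Y : ℤ) - (M.rk X : ℤ) ∧
      (M.rk Y : ℤ) - (M.rk X : ℤ) < ((Y \ X).ncard : ℤ) := by
  have hYE : Y ⊆ M.E := hY.1.subset_ground
  have hlower : M.rk X + 1 ≤ M.rk Y := by
    have h := hX.1.eRk_add_one_le_eRk_of_ssubset hXY hYE
    rw [← Matroid.rk_eq_eRk, ← Matroid.rk_eq_eRk] at h
    exact_mod_cast h
  have hupper : M.rk Y + 1 ≤ M.rk X + (Y \ X).ncard := by
    have h := hY.eRk_add_one_le_eRk_add_encard_sdiff hXY
    rw [← Matroid.rk_eq_eRk, ← Matroid.rk_eq_eRk,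
      ← (M.set_finite (Y \ X) (sdiff_subset.trans hYE)).cast_ncard_eq] at h
    exact_mod_cast h
  omega
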